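/- Weak König's Lemma implies the Fan Theorem (Ishihara's theorem, Theorem 2.2): assume that for every B' : List Bool → Bool, if for every m there exists a list s : List Bool of length m with B' (s.take k) = false for all k ≤ m, then there exists γ : ℕ → Bool with B' (γ↾n) = false for all n. Then for every B : List Bool → Bool, if every γ : ℕ → Bool has some n with B (γ↾n) = true, then there exists m such that every γ : ℕ → Bool has some n ≤ m with B (γ↾n) = true. -/

import Mathlib

/-!
If the bar `B` were not uniform, then for every depth `m` some path avoids `B` up to `m`, so the
tree of nodes none of whose prefixes lie in `B` is infinite. Weak König's Lemma yields an infinite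
path through that tree, i.e. a path that is never barred, contradicting that `B` is a bar.
-/

/-- The first `n` values of `γ` as a list. -/
def seg (γ : ℕ → Bool) (n : ℕ) : List Bool := List.ofFn fun i : Fin n => γ i

@[simp]
lemma length_seg (γ : ℕ → Bool) (n : ℕ) : (seg γ n).length = n := by
  simp [seg]

lemma take_seg (γ : ℕ → Bool) {n k : ℕ} (h : k ≤ n) : (seg γ n).take k = seg γ k := by
  apply List.ext_getElem <;> simp [seg, h]

def hasBarredPrefix (B : List Bool → Bool) (s : List Bool) : Bool :=
  decide (∃ k ≤ s.length, B (s.take k) = true)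

lemma hasBarredPrefix_seg_eq_false_iff (B : List Bool → Bool) (γ : ℕ → Bool) (n : ℕ) :
    hasBarredPrefix B (seg γ n) = false ↔ ∀ k ≤ n, B (seg γ k) = false := by
  simp only [hasBarredPrefix, decide_eq_false_iff_not, not_exists, not_and, Bool.not_eq_true,
    length_seg]
  exact forall₂_congr fun k hk => by rw [take_seg γ hk]

lemma hasBarredPrefix_take_seg_eq_false {B : List Bool → Bool} {γ : ℕ → Bool} {m : ℕ}
    (hγ : ∀ n ≤ m, B (seg γ n) = false) {k : ℕ} (hk : k ≤ m) :
    hasBarredPrefix B ((seg γ m).take k) = false := by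
  rw [take_seg γ hk, hasBarredPrefix_seg_eq_false_iff]
  exact fun j hj => hγ j (hj.trans hk)

/-- Weak König's Lemma implies the Fan Theorem (Ishihara's theorem, Theorem 2.2). -/
theorem wkl_implies_fan_theorem
    (hWKL : ∀ B' : List Bool → Bool,
      (∀ m : ℕ, ∃ s : List Bool, s.length = m ∧ ∀ k ≤ m, B' (s.take k) = false) →
      ∃ γ : ℕ → Bool, ∀ n, B' (seg γ n) = false) :
    ∀ B : List Bool → Bool,
      (∀ γ : ℕ → Bool, ∃ n, B (seg γ n) = true) →
      ∃ m, ∀ γ : ℕ → Bool, ∃ n ≤ m, B (seg γ n) = true := by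
  intro B hbar
  by_contra! hnonuniform
  simp only [ne_eq, Bool.not_eq_true] at hnonuniform
  have hinfinite : ∀ m, ∃ s : List Bool, s.length = m ∧
      ∀ k ≤ m, hasBarredPrefix B (s.take k) = false := fun m =>
    let ⟨γ, hγ⟩ := hnonuniform m
    ⟨seg γ m, length_seg γ m, fun _ hk => hasBarredPrefix_take_seg_eq_false hγ hk⟩
  obtain ⟨γ, hγ⟩ := hWKL _ hinfinite
  obtain ⟨n, hn⟩ := hbar γ
  have hunbarred := (hasBarredPrefix_seg_eq_false_iff B γ n).1 (hγ n) n le_rfl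
  simp [hn] at hunbarred
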